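/- arXiv:2307.08449 — 5 statements merged into one kernel-verified Lean document; each statement's English description precedes it below -/
import Mathlib

section
/- Let F be a monotone submodular function with F(∅)=0 on subsets of a finite set Ω with cardinality constraint k. If the greedy algorithm builds sets ∅ = G_0 ⊆ G_1 ⊆ ... ⊆ G_k by at each step adding an element maximizing the marginal gain, then F(G_k) ≥ (1 − (1 − 1/k)^k) · max_{|S| ≤ k} F(S) ≥ (1 − e^{-1}) · max_{|S| ≤ k} F(S). -/
/-! Let `Δᵢ = F S - F Gᵢ`. Submodularity bounds the gain of adding `S` to `Gᵢ` by the sum of the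
`|S| ≤ k` single-element gains, each at most the greedy gain `F Gᵢ₊₁ - F Gᵢ`; with monotonicity
this gives `Δᵢ ≤ k (Δᵢ - Δᵢ₊₁)`, i.e. `Δᵢ₊₁ ≤ (1 - 1/k) Δᵢ`. Hence `Δₖ ≤ (1 - 1/k)ᵏ F S`, and
`(1 - 1/k)ᵏ ≤ e⁻¹`. -/

open Finset

def IsSubmodular {Ω β : Type*} [DecidableEq Ω] [Add β] [LE β] (F : Finset Ω → β) : Prop :=
  ∀ A B : Finset Ω, F (A ∪ B) + F (A ∩ B) ≤ F A + F B

namespace IsSubmodular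

variable {Ω β : Type*} [DecidableEq Ω] [AddCommGroup β] [PartialOrder β] [IsOrderedAddMonoid β]
  {F : Finset Ω → β}

theorem insert_union_sub_le (hF : IsSubmodular F) (A : Finset Ω) {T : Finset Ω} {z : Ω}
    (hz : z ∉ T) : F (insert z (A ∪ T)) - F (A ∪ T) ≤ F (insert z A) - F A := by
  have h := hF (insert z A) (A ∪ T)
  rw [show insert z A ∪ (A ∪ T) = insert z (A ∪ T) by grind,
    show insert z A ∩ (A ∪ T) = A by grind] at h
  rwa [sub_le_sub_iff]

theorem sub_le_sum_insert_sub (hF : IsSubmodular F) (A T : Finset Ω) :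
    F (A ∪ T) - F A ≤ ∑ y ∈ T, (F (insert y A) - F A) := by
  induction T using Finset.induction_on with
  | empty => simp
  | insert z T hz ih =>
    rw [sum_insert hz, union_insert]
    calc F (insert z (A ∪ T)) - F A
        = (F (insert z (A ∪ T)) - F (A ∪ T)) + (F (A ∪ T) - F A) := by abel
      _ ≤ (F (insert z A) - F A) + ∑ y ∈ T, (F (insert y A) - F A) :=
        add_le_add (hF.insert_union_sub_le A hz) ih

theorem sub_le_card_nsmul_of_forall_le (hF : IsSubmodular F) (hmono : Monotone F)
    {A S : Finset Ω} {g : Ω} (hg : ∀ y, F (insert y A) - F A ≤ F (insert g A) - F A) :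
    F S - F A ≤ S.card • (F (insert g A) - F A) :=
  calc F S - F A ≤ F (A ∪ S) - F A := sub_le_sub_right (hmono subset_union_right) _
    _ ≤ ∑ y ∈ S, (F (insert y A) - F A) := hF.sub_le_sum_insert_sub A S
    _ ≤ ∑ _y ∈ S, (F (insert g A) - F A) := sum_le_sum fun y _ => hg y
    _ = S.card • (F (insert g A) - F A) := sum_const _

end IsSubmodular

theorem le_one_sub_inv_pow_mul {k : ℝ} (hk : 1 ≤ k) {a : ℕ → ℝ} {n : ℕ}
    (h : ∀ i < n, a i ≤ k * (a i - a (i + 1))) : a n ≤ (1 - 1 / k) ^ n * a 0 := by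
  induction n with
  | zero => simp
  | succ n ih =>
    have hstep : a (n + 1) ≤ (1 - 1 / k) * a n := by
      have := h n n.lt_succ_self
      rw [one_sub_mul, one_div_mul_eq_div, le_sub_comm, div_le_iff₀ (by linarith)]
      linarith
    have hc : 0 ≤ 1 - 1 / k := sub_nonneg.2 ((div_le_one (by linarith)).2 hk)
    calc a (n + 1) ≤ (1 - 1 / k) * a n := hstep
      _ ≤ (1 - 1 / k) * ((1 - 1 / k) ^ n * a 0) :=
        mul_le_mul_of_nonneg_left (ih fun i hi => h i (by omega)) hc
      _ = (1 - 1 / k) ^ (n + 1) * a 0 := by ring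

theorem IsSubmodular.greedy_gap_le {Ω : Type*} [DecidableEq Ω] {F : Finset Ω → ℝ}
    (hF : IsSubmodular F) (hmono : Monotone F) {k : ℕ} (hk : 1 ≤ k)
    {G : ℕ → Finset Ω} {x : ℕ → Ω} (hG : ∀ i < k, G (i + 1) = insert (x (i + 1)) (G i))
    (hx : ∀ i < k, ∀ y, F (insert y (G i)) - F (G i) ≤ F (insert (x (i + 1)) (G i)) - F (G i))
    {S : Finset Ω} (hS : S.card ≤ k) :
    F S - F (G k) ≤ (1 - 1 / (k : ℝ)) ^ k * (F S - F (G 0)) := by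
  refine le_one_sub_inv_pow_mul (k := (k : ℝ)) (a := fun i => F S - F (G i))
    (by exact_mod_cast hk) fun i hi => ?_
  have hgain : 0 ≤ F (insert (x (i + 1)) (G i)) - F (G i) :=
    sub_nonneg.2 (hmono (subset_insert _ _))
  calc F S - F (G i) ≤ S.card • (F (insert (x (i + 1)) (G i)) - F (G i)) :=
        hF.sub_le_card_nsmul_of_forall_le hmono (hx i hi)
    _ ≤ k • (F (insert (x (i + 1)) (G i)) - F (G i)) := nsmul_le_nsmul_left hgain hS
    _ = k * (F S - F (G i) - (F S - F (G (i + 1)))) := by rw [nsmul_eq_mul, hG i hi]; ring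

theorem greedy_cardinality_guarantee_general {Ω : Type*} [DecidableEq Ω]
    (F : Finset Ω → ℝ)
    (hsub : ∀ A B : Finset Ω, F (A ∪ B) + F (A ∩ B) ≤ F A + F B)
    (hmono : ∀ A B : Finset Ω, A ⊆ B → F A ≤ F B)
    (hempty : F ∅ = 0)
    (k : ℕ) (hk : 1 ≤ k)
    (G : ℕ → Finset Ω) (x : ℕ → Ω)
    (hG0 : G 0 = ∅)
    (hGstep : ∀ i, 1 ≤ i → i ≤ k → G i = insert (x i) (G (i - 1)))
    (hgreedy : ∀ i, 1 ≤ i → i ≤ k → ∀ y : Ω,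
      F (insert y (G (i - 1))) - F (G (i - 1)) ≤
        F (insert (x i) (G (i - 1))) - F (G (i - 1))) :
    ∀ S : Finset Ω, S.card ≤ k →
      F (G k) ≥ (1 - (1 - 1 / (k : ℝ)) ^ k) * F S ∧
      (1 - (1 - 1 / (k : ℝ)) ^ k) * F S ≥ (1 - Real.exp (-1)) * F S := by
  intro S hS
  have hFS : 0 ≤ F S := hempty ▸ hmono ∅ S (empty_subset S)
  have hgap : F S - F (G k) ≤ (1 - 1 / (k : ℝ)) ^ k * F S := by
    have h := IsSubmodular.greedy_gap_le hsub hmono hk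
      (fun i hi => by simpa using hGstep (i + 1) (by omega) hi)
      (fun i hi => by simpa using hgreedy (i + 1) (by omega) hi) hS
    rwa [hG0, hempty, sub_zero] at h
  have hexp : (1 - 1 / (k : ℝ)) ^ k ≤ Real.exp (-1) :=
    Real.one_sub_div_pow_le_exp_neg (by exact_mod_cast hk)
  exact ⟨by linarith, mul_le_mul_of_nonneg_right (by linarith) hFS⟩

/-- Nemhauser–Wolsey–Fisher greedy guarantee under a cardinality constraint. -/
theorem greedy_cardinality_guarantee {Ω : Type*} [Fintype Ω] [DecidableEq Ω] [Nonempty Ω]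
    (F : Finset Ω → ℝ)
    (hsub : ∀ A B : Finset Ω, F (A ∪ B) + F (A ∩ B) ≤ F A + F B)
    (hmono : ∀ A B : Finset Ω, A ⊆ B → F A ≤ F B)
    (hempty : F ∅ = 0)
    (k : ℕ) (hk : 1 ≤ k)
    (G : ℕ → Finset Ω) (x : ℕ → Ω)
    (hG0 : G 0 = ∅)
    (hGstep : ∀ i, 1 ≤ i → i ≤ k → G i = insert (x i) (G (i - 1)))
    (hgreedy : ∀ i, 1 ≤ i → i ≤ k → ∀ y : Ω,
      F (insert y (G (i - 1))) - F (G (i - 1)) ≤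
        F (insert (x i) (G (i - 1))) - F (G (i - 1))) :
    ∀ S : Finset Ω, S.card ≤ k →
      F (G k) ≥ (1 - (1 - 1 / (k : ℝ)) ^ k) * F S ∧
      (1 - (1 - 1 / (k : ℝ)) ^ k) * F S ≥ (1 - Real.exp (-1)) * F S :=
  greedy_cardinality_guarantee_general F hsub hmono hempty k hk G x hG0 hGstep hgreedy
end

section
/- Let F be monotone submodular with F(∅)=0 on a finite set Ω, let k ≥ 1, and suppose the greedy sequence G_0 = ∅, G_i = G_{i−1} ∪ {x_i} satisfies, for each i, F(G_i) − F(G_{i−1}) ≥ max_{x} (F(G_{i−1} ∪ {x}) − F(G_{i−1})) − ε_i for additive errors ε_i ≥ 0. Then F(G_k) ≥ (1 − e^{-1}) · max_{|S| ≤ k} F(S) − Σ_{i=1}^{k} ε_i. -/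
/-- Approximate greedy with additive per-step errors εᵢ achieves
(1 - e⁻¹)·OPT − ∑ εᵢ (Streeter–Golovin style, unit costs). -/
theorem approximate_greedy_guarantee {Ω : Type*} [Fintype Ω] [DecidableEq Ω] [Nonempty Ω]
    (F : Finset Ω → ℝ)
    (hsub : ∀ A B : Finset Ω, F (A ∪ B) + F (A ∩ B) ≤ F A + F B)
    (hmono : ∀ A B : Finset Ω, A ⊆ B → F A ≤ F B)
    (hempty : F ∅ = 0)
    (k : ℕ) (hk : 1 ≤ k)
    (G : ℕ → Finset Ω) (x : ℕ → Ω) (ε : ℕ → ℝ)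
    (hε : ∀ i, 0 ≤ ε i)
    (hG0 : G 0 = ∅)
    (hGstep : ∀ i, 1 ≤ i → i ≤ k → G i = insert (x i) (G (i - 1)))
    (hgreedy : ∀ i, 1 ≤ i → i ≤ k →
      F (G i) - F (G (i - 1)) ≥
        (⨆ y : Ω, (F (insert y (G (i - 1))) - F (G (i - 1)))) - ε i) :
    ∀ S : Finset Ω, S.card ≤ k →
      F (G k) ≥ (1 - Real.exp (-1)) * F S - ∑ i ∈ Finset.Icc 1 k, ε i := by
  intro S hS
  have hkpos : (0:ℝ) < (k:ℝ) := by exact_mod_cast hk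
  -- diminishing returns
  have hdim : ∀ (A B : Finset Ω) (a : Ω), A ⊆ B →
      F (insert a B) - F B ≤ F (insert a A) - F A := by
    intro A B a hAB
    by_cases ha : a ∈ B
    · rw [Finset.insert_eq_self.mpr ha]
      have := hmono A (insert a A) (Finset.subset_insert a A)
      linarith
    · have h := hsub (insert a A) B
      have h1 : insert a A ∪ B = insert a B := by
        rw [Finset.insert_union, Finset.union_eq_right.mpr hAB]
      have h2 : insert a A ∩ B = A := by
        ext y
        simp only [Finset.mem_inter, Finset.mem_insert]
        constructor
        · rintro ⟨h | h, hy⟩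
          · exact absurd (h ▸ hy) ha
          · exact h
        · intro hy; exact ⟨Or.inr hy, hAB hy⟩
      rw [h1, h2] at h
      linarith
  -- submodular sum bound
  have hsumb : ∀ (T A : Finset Ω),
      F (A ∪ T) ≤ F A + ∑ e ∈ T, (F (insert e A) - F A) := by
    intro T
    induction T using Finset.induction_on with
    | empty => intro A; simp
    | @insert a T ha ih =>
      intro A
      have h1 : A ∪ insert a T = insert a (A ∪ T) := by
        rw [Finset.union_insert]
      rw [h1, Finset.sum_insert ha]
      have h2 := hdim A (A ∪ T) a Finset.subset_union_left
      have h3 := ih A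
      linarith
  set c : ℝ := 1 - 1/(k:ℝ) with hc
  have hk1 : 1/(k:ℝ) ≤ 1 := by
    rw [div_le_one hkpos]; exact_mod_cast hk
  have hk1' : 0 ≤ 1/(k:ℝ) := by positivity
  have hc0 : 0 ≤ c := by rw [hc]; linarith
  have hc1 : c ≤ 1 := by rw [hc]; linarith
  set δ : ℕ → ℝ := fun i => F S - F (G i) with hδ
  -- one-step recursion
  have hstep : ∀ i, 1 ≤ i → i ≤ k → δ i ≤ c * δ (i-1) + ε i := by
    intro i h1 h2
    set A := G (i-1) with hA
    set M : ℝ := ⨆ y : Ω, (F (insert y A) - F A) with hM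
    have hbdd : BddAbove (Set.range fun y : Ω => F (insert y A) - F A) :=
      (Set.finite_range _).bddAbove
    have hMy : ∀ y : Ω, F (insert y A) - F A ≤ M := fun y => le_ciSup hbdd y
    have hSbound : F S ≤ F A + (k:ℝ) * M := by
      have h0 : F S ≤ F (A ∪ S) := hmono _ _ Finset.subset_union_right
      have h1' := hsumb S A
      have h2' : ∑ e ∈ S, (F (insert e A) - F A) ≤ (S.card : ℝ) * M := by
        calc ∑ e ∈ S, (F (insert e A) - F A) ≤ ∑ _e ∈ S, M :=
              Finset.sum_le_sum (fun e _ => hMy e)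
          _ = (S.card : ℝ) * M := by rw [Finset.sum_const, nsmul_eq_mul]
      have hM0 : 0 ≤ M := by
        obtain ⟨y⟩ := ‹Nonempty Ω›
        have := hMy y
        have := hmono A (insert y A) (Finset.subset_insert y A)
        linarith
      have h3' : (S.card : ℝ) * M ≤ (k:ℝ) * M := by
        apply mul_le_mul_of_nonneg_right _ hM0
        exact_mod_cast hS
      linarith
    have hg := hgreedy i h1 h2
    have hMge : M ≥ (F S - F A) / (k:ℝ) := by
      rw [ge_iff_le, div_le_iff₀ hkpos]
      linarith [mul_comm M (k:ℝ)]
    have : δ i ≤ δ (i-1) - (F S - F A)/(k:ℝ) + ε i := by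
      simp only [hδ]
      have : F (G i) - F A ≥ M - ε i := hg
      linarith
    have heq : δ (i-1) - (F S - F A)/(k:ℝ) = c * δ (i-1) := by
      simp only [hδ, hc, hA]
      field_simp
    linarith [heq ▸ this]
  -- iterated recursion
  have hind : ∀ i, i ≤ k → δ i ≤ c^i * δ 0 + ∑ j ∈ Finset.Icc 1 i, ε j := by
    intro i
    induction i with
    | zero => intro _; simp
    | succ n ih =>
      intro hn
      have hn' : n ≤ k := Nat.le_of_succ_le hn
      have ihn := ih hn'
      have hs := hstep (n+1) (Nat.le_add_left 1 n) hn
      simp only [Nat.add_sub_cancel] at hs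
      have hsum_nonneg : 0 ≤ ∑ j ∈ Finset.Icc 1 n, ε j :=
        Finset.sum_nonneg (fun j _ => hε j)
      have hIcc : ∑ j ∈ Finset.Icc 1 (n+1), ε j
          = (∑ j ∈ Finset.Icc 1 n, ε j) + ε (n+1) :=
        Finset.sum_Icc_succ_top (Nat.le_add_left 1 n) ε
      have h1 : c * δ n ≤ c * (c^n * δ 0 + ∑ j ∈ Finset.Icc 1 n, ε j) :=
        mul_le_mul_of_nonneg_left ihn hc0
      have h2 : c * (∑ j ∈ Finset.Icc 1 n, ε j) ≤ ∑ j ∈ Finset.Icc 1 n, ε j := by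
        nlinarith
      rw [hIcc]
      have : c * (c^n * δ 0) = c^(n+1) * δ 0 := by ring
      nlinarith
  have hδk := hind k le_rfl
  -- c^k ≤ exp (-1)
  have hck : c^k ≤ Real.exp (-1) := by
    have h1 : c ≤ Real.exp (-(1/(k:ℝ))) := by
      have := Real.add_one_le_exp (-(1/(k:ℝ)))
      simp only [hc]; linarith
    have h2 : c^k ≤ (Real.exp (-(1/(k:ℝ))))^k :=
      pow_le_pow_left₀ hc0 h1 k
    have h3 : (Real.exp (-(1/(k:ℝ))))^k = Real.exp (-1) := by
      rw [← Real.exp_nat_mul]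
      congr 1
      field_simp
    linarith [h3 ▸ h2]
  have hFS0 : 0 ≤ F S := by
    have := hmono ∅ S (Finset.empty_subset S)
    linarith
  simp only [hδ, hG0, hempty, sub_zero] at hδk
  have : c^k * F S ≤ Real.exp (-1) * F S :=
    mul_le_mul_of_nonneg_right hck hFS0
  linarith
end

section
/- Let F be monotone submodular with F(∅)=0 on a finite set Ω, and let c: Ω → ℝ_{>0} be a cost function. If at each step the greedy algorithm chooses x_i maximizing the ratio (F(G_{i−1} ∪ {x}) − F(G_{i−1}))/c(x), then for each step i and for any set S with cost(S) = Σ_{y∈S} c(y) ≤ C, the chosen element satisfies F(G_{i−1} ∪ {x_i}) − F(G_{i−1}) ≥ (c(x_i)/C) · (F(S) − F(G_{i−1})). -/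
lemma greedy_union_bound {Ω : Type*} [Fintype Ω] [DecidableEq Ω]
    (F : Finset Ω → ℝ)
    (hsub : ∀ A B : Finset Ω, F (A ∪ B) + F (A ∩ B) ≤ F A + F B)
    (hmono : ∀ A B : Finset Ω, A ⊆ B → F A ≤ F B)
    (G : Finset Ω) : ∀ S : Finset Ω,
    F (G ∪ S) - F G ≤ ∑ y ∈ S, (F (insert y G) - F G) := by
  intro S
  induction S using Finset.induction_on with
  | empty => simp
  | @insert a S ha ih =>
    rw [Finset.sum_insert ha]
    have key : F (G ∪ insert a S) ≤ F (insert a G) + F (G ∪ S) - F G := by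
      have h := hsub (insert a G) (G ∪ S)
      have h1 : insert a G ∪ (G ∪ S) = G ∪ insert a S := by
        ext x; simp only [Finset.mem_insert, Finset.mem_union]; tauto
      have h2 : G ⊆ insert a G ∩ (G ∪ S) := by
        intro x hx; simp [Finset.mem_inter, Finset.mem_insert, Finset.mem_union, hx]
      have h3 := hmono _ _ h2
      rw [h1] at h
      linarith
    linarith

/-- Per-step lemma for cost-adjusted greedy: if xᵢ maximizes the ratio of
marginal gain to cost, its marginal gain is at least (c(xᵢ)/C) of the
remaining gap to any feasible set S of cost at most C. -/
theorem cost_adjusted_greedy_step {Ω : Type*} [Fintype Ω] [DecidableEq Ω]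
    (F : Finset Ω → ℝ) (c : Ω → ℝ) (hc : ∀ x, 0 < c x) (C : ℝ) (hC : 0 < C)
    (hsub : ∀ A B : Finset Ω, F (A ∪ B) + F (A ∩ B) ≤ F A + F B)
    (hmono : ∀ A B : Finset Ω, A ⊆ B → F A ≤ F B)
    (hempty : F ∅ = 0)
    (G : Finset Ω) (xi : Ω)
    (hgreedy : ∀ y : Ω,
      (F (insert y G) - F G) / c y ≤ (F (insert xi G) - F G) / c xi) :
    ∀ S : Finset Ω, (∑ y ∈ S, c y) ≤ C →
      F (insert xi G) - F G ≥ (c xi / C) * (F S - F G) := by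
  intro S hS
  set r : ℝ := (F (insert xi G) - F G) / c xi with hr
  have hrnn : 0 ≤ r := by
    apply div_nonneg _ (hc xi).le
    have := hmono G (insert xi G) (Finset.subset_insert _ _)
    linarith
  have h1 : F S - F G ≤ ∑ y ∈ S, (F (insert y G) - F G) := by
    have := greedy_union_bound F hsub hmono G S
    have hmS := hmono S (G ∪ S) Finset.subset_union_right
    linarith
  have h2 : ∑ y ∈ S, (F (insert y G) - F G) ≤ ∑ y ∈ S, c y * r := by
    apply Finset.sum_le_sum
    intro y _
    have := hgreedy y
    calc F (insert y G) - F G = c y * ((F (insert y G) - F G) / c y) := by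
          rw [mul_div_cancel₀ _ (hc y).ne']
      _ ≤ c y * r := by
          apply mul_le_mul_of_nonneg_left this (hc y).le
  have h3 : ∑ y ∈ S, c y * r ≤ C * r := by
    rw [← Finset.sum_mul]
    exact mul_le_mul_of_nonneg_right hS hrnn
  have h4 : F S - F G ≤ C * r := by linarith
  have key : c xi / C * (F S - F G) ≤ c xi / C * (C * r) :=
    mul_le_mul_of_nonneg_left h4 (div_nonneg (hc xi).le hC.le)
  have heq : c xi / C * (C * r) = F (insert xi G) - F G := by
    rw [div_mul_eq_mul_div, mul_comm C r, ← mul_assoc, mul_div_assoc,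
      div_self hC.ne', mul_one, hr, mul_div_cancel₀ _ (hc xi).ne']
  linarith
end

section
/- Let F be a monotone set function with F(∅)=0, c a positive cost function, and suppose a sequence G_0 = ∅, G_i = G_{i−1} ∪ {x_i} satisfies F(G_i) − F(G_{i−1}) ≥ (c(x_i)/C)·(OPT − F(G_{i−1})) for all i = 1,...,L, where OPT ≥ 0 and Σ_{i=1}^{L} c(x_i) ≥ C. Then F(G_L) ≥ (1 − e^{-1})·OPT. -/
/-!
With the gap `gᵢ = OPT - F(Gᵢ)` and `tᵢ = c(xᵢ)/C`, each greedy step gives `gᵢ ≤ (1 - tᵢ) gᵢ₋₁`,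
hence `gᵢ ≤ e^{-tᵢ} gᵢ₋₁` as long as the gap is nonnegative; once it is negative, monotonicity
of `F` keeps it negative. So the positive part of the gap shrinks by `e^{-tᵢ}` at every step, and
after spending the budget, `g_L ≤ e^{-Σ tᵢ} OPT ≤ e⁻¹ OPT`.
-/

open Finset Real

lemma posPart_le_exp_neg_mul_posPart {g g' t : ℝ} (hmono : g' ≤ g)
    (hcontr : g' ≤ (1 - t) * g) : g'⁺ ≤ exp (-t) * g⁺ := by
  rcases le_or_gt 0 g with hg | hg
  · have : (1 - t) * g ≤ exp (-t) * g :=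
      mul_le_mul_of_nonneg_right (by linarith [add_one_le_exp (-t)]) hg
    rw [posPart_eq_self.2 hg]
    exact sup_le (by linarith) (by positivity)
  · rw [posPart_eq_zero.2 (by linarith), posPart_eq_zero.2 hg.le, mul_zero]

lemma posPart_le_exp_neg_sum_mul_posPart {g t : ℕ → ℝ} {n : ℕ}
    (hmono : ∀ i, 1 ≤ i → i ≤ n → g i ≤ g (i - 1))
    (hcontr : ∀ i, 1 ≤ i → i ≤ n → g i ≤ (1 - t i) * g (i - 1)) :
    (g n)⁺ ≤ exp (-∑ i ∈ Icc 1 n, t i) * (g 0)⁺ := by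
  induction n with
  | zero => simp
  | succ n ih =>
    have hlast : (g (n + 1))⁺ ≤ exp (-t (n + 1)) * (g n)⁺ :=
      posPart_le_exp_neg_mul_posPart (hmono (n + 1) le_add_self le_rfl)
        (hcontr (n + 1) le_add_self le_rfl)
    have hprev := ih (fun i h1 h2 ↦ hmono i h1 (by omega)) (fun i h1 h2 ↦ hcontr i h1 (by omega))
    rw [sum_Icc_succ_top (by omega), neg_add, exp_add]
    calc (g (n + 1))⁺ ≤ exp (-t (n + 1)) * (g n)⁺ := hlast
      _ ≤ exp (-t (n + 1)) * (exp (-∑ i ∈ Icc 1 n, t i) * (g 0)⁺) := by gcongr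
      _ = _ := by ring

theorem budgeted_greedy_guarantee_general {Ω : Type*} [DecidableEq Ω]
    (F : Finset Ω → ℝ) (c : Ω → ℝ) (C : ℝ) (hC : 0 < C)
    (hmono : ∀ A B : Finset Ω, A ⊆ B → F A ≤ F B)
    (hempty : F ∅ = 0)
    (OPT : ℝ) (hOPT : 0 ≤ OPT)
    (L : ℕ) (G : ℕ → Finset Ω) (x : ℕ → Ω)
    (hG0 : G 0 = ∅)
    (hGstep : ∀ i, 1 ≤ i → i ≤ L → G i = insert (x i) (G (i - 1)))
    (hstep : ∀ i, 1 ≤ i → i ≤ L →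
      F (G i) - F (G (i - 1)) ≥ (c (x i) / C) * (OPT - F (G (i - 1))))
    (hbudget : C ≤ ∑ i ∈ Finset.Icc 1 L, c (x i)) :
    F (G L) ≥ (1 - Real.exp (-1)) * OPT := by
  have hgap := posPart_le_exp_neg_sum_mul_posPart (g := fun i ↦ OPT - F (G i))
    (t := fun i ↦ c (x i) / C) (n := L)
    (fun i h1 h2 ↦ by
      have := hmono _ _ ((hGstep i h1 h2).symm ▸ subset_insert _ _)
      linarith)
    (fun i h1 h2 ↦ by linarith [hstep i h1 h2])
  have hspent : 1 ≤ ∑ i ∈ Icc 1 L, c (x i) / C := by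
    rwa [← sum_div, le_div_iff₀ hC, one_mul]
  simp only [hG0, hempty, sub_zero, posPart_eq_self.2 hOPT] at hgap
  calc (1 - exp (-1)) * OPT = OPT - exp (-1) * OPT := by ring
    _ ≤ OPT - (OPT - F (G L))⁺ := by
      gcongr
      exact hgap.trans (by gcongr)
    _ ≤ F (G L) := by linarith [le_posPart (OPT - F (G L))]

/-- If each greedy step closes a (c(xᵢ)/C) fraction of the gap to OPT and the
total cost spent is at least the budget C, then F(G_L) ≥ (1 - e⁻¹)·OPT. -/
theorem budgeted_greedy_guarantee {Ω : Type*} [Fintype Ω] [DecidableEq Ω]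
    (F : Finset Ω → ℝ) (c : Ω → ℝ) (hc : ∀ x, 0 < c x) (C : ℝ) (hC : 0 < C)
    (hmono : ∀ A B : Finset Ω, A ⊆ B → F A ≤ F B)
    (hempty : F ∅ = 0)
    (OPT : ℝ) (hOPT : 0 ≤ OPT)
    (L : ℕ) (G : ℕ → Finset Ω) (x : ℕ → Ω)
    (hG0 : G 0 = ∅)
    (hGstep : ∀ i, 1 ≤ i → i ≤ L → G i = insert (x i) (G (i - 1)))
    (hstep : ∀ i, 1 ≤ i → i ≤ L →
      F (G i) - F (G (i - 1)) ≥ (c (x i) / C) * (OPT - F (G (i - 1))))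
    (hbudget : C ≤ ∑ i ∈ Finset.Icc 1 L, c (x i)) :
    F (G L) ≥ (1 - Real.exp (-1)) * OPT :=
  budgeted_greedy_guarantee_general F c C hC hmono hempty OPT hOPT L G x hG0 hGstep hstep hbudget
end

section
/- Let F be monotone submodular with F(∅)=0 on finite Ω and k ≥ 1. For the greedy sets G_i and optimum S* with |S*| ≤ k, at every step i there exists an element x ∈ S* \ G_{i−1} (or S* ⊆ G_{i−1}) whose marginal gain satisfies F(G_{i−1} ∪ {x}) − F(G_{i−1}) ≥ (F(S*) − F(G_{i−1}))/k. -/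
lemma greedy_aux {Ω : Type*} [DecidableEq Ω]
    (F : Finset Ω → ℝ)
    (hsub : ∀ A B : Finset Ω, F (A ∪ B) + F (A ∩ B) ≤ F A + F B)
    (hmono : ∀ A B : Finset Ω, A ⊆ B → F A ≤ F B)
    (S G : Finset Ω) :
    F (G ∪ S) - F G ≤ ∑ x ∈ S, (F (insert x G) - F G) := by
  induction S using Finset.induction_on with
  | empty => simp
  | @insert a T ha ih =>
    rw [Finset.sum_insert ha]
    have h1 := hsub (insert a G) (G ∪ T)
    have h2 : F G ≤ F ((insert a G) ∩ (G ∪ T)) := by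
      apply hmono
      intro x hx
      exact Finset.mem_inter.mpr ⟨Finset.mem_insert_of_mem hx, Finset.mem_union_left _ hx⟩
    have h3 : (insert a G) ∪ (G ∪ T) = G ∪ insert a T := by
      ext x; simp only [Finset.mem_union, Finset.mem_insert]; tauto
    rw [h3] at h1
    linarith

/-- Averaging lemma: some element of S* \ G has marginal gain at least a 1/k
fraction of the remaining gap (or S* ⊆ G). -/
theorem greedy_averaging_lemma {Ω : Type*} [Fintype Ω] [DecidableEq Ω]
    (F : Finset Ω → ℝ)
    (hsub : ∀ A B : Finset Ω, F (A ∪ B) + F (A ∩ B) ≤ F A + F B)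
    (hmono : ∀ A B : Finset Ω, A ⊆ B → F A ≤ F B)
    (hempty : F ∅ = 0)
    (k : ℕ) (hk : 1 ≤ k)
    (Sstar G : Finset Ω) (hcard : Sstar.card ≤ k) :
    Sstar ⊆ G ∨ ∃ x ∈ Sstar \ G,
      F (insert x G) - F G ≥ (F Sstar - F G) / (k : ℝ) := by
  by_cases h : Sstar ⊆ G
  · exact Or.inl h
  · right
    set S := Sstar \ G with hS
    have hne : S.Nonempty := by
      rw [hS, Finset.sdiff_nonempty]; exact h
    obtain ⟨x, hxS, hmax⟩ := S.exists_max_image (fun y => F (insert y G) - F G) hne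
    refine ⟨x, hxS, ?_⟩
    have hxnonneg : 0 ≤ F (insert x G) - F G := by
      have := hmono G (insert x G) (Finset.subset_insert _ _)
      linarith
    have hsum : ∑ y ∈ S, (F (insert y G) - F G) ≤ S.card * (F (insert x G) - F G) := by
      calc ∑ y ∈ S, (F (insert y G) - F G)
          ≤ ∑ _y ∈ S, (F (insert x G) - F G) :=
            Finset.sum_le_sum fun y hy => hmax y hy
        _ = S.card * (F (insert x G) - F G) := by
            rw [Finset.sum_const, nsmul_eq_mul]
    have hgap : F Sstar - F G ≤ ∑ y ∈ S, (F (insert y G) - F G) := by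
      have h1 := greedy_aux F hsub hmono S G
      have h2 : F Sstar ≤ F (G ∪ S) := by
        apply hmono
        intro y hy
        by_cases hyG : y ∈ G
        · exact Finset.mem_union_left _ hyG
        · exact Finset.mem_union_right _ (Finset.mem_sdiff.mpr ⟨hy, hyG⟩)
      linarith
    have hcardS : (S.card : ℝ) ≤ (k : ℝ) := by
      exact_mod_cast le_trans (Finset.card_le_card (Finset.sdiff_subset)) hcard
    have hkpos : (0 : ℝ) < k := by exact_mod_cast hk
    rw [ge_iff_le, div_le_iff₀ hkpos]
    calc F Sstar - F G ≤ S.card * (F (insert x G) - F G) := le_trans hgap hsum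
      _ ≤ (k : ℝ) * (F (insert x G) - F G) := by
          apply mul_le_mul_of_nonneg_right hcardS hxnonneg
      _ = (F (insert x G) - F G) * k := mul_comm _ _
end
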